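/- arXiv:2112.14863 — 2 statements merged into one kernel-verified Lean document; each statement's English description precedes it below -/
import Mathlib

section
/- Suppose b divides a. Let q be a rational function in ℚ(x). Then the element f(q) = q/(1 - a·x·q - b·q²) of ℚ(x) (the denominator 1 - a·x·q - b·q² is a nonzero element of ℚ(x)) is a polynomial with integer coefficients (i.e., lies in the image of ℤ[x] in ℚ(x)) if and only if q = F_i(x)/F_{i+1}(x) for some natural number i, or q = -F_{i+1}(x)/(b·F_i(x)) for some positive integer i. -/
open Polynomial

/-- The polynomial sequence `F_i(x)` in `ℤ[x]`:
`F_0 = 0`, `F_1 = 1`, `F_{i+2}(x) = a·x·F_{i+1}(x) + b·F_i(x)`. -/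
noncomputable def polyF (a b : ℤ) : ℕ → Polynomial ℤ
  | 0 => 0
  | 1 => 1
  | n + 2 => C a * X * polyF a b (n + 1) + C b * polyF a b n

/-- The canonical embedding of `ℤ[x]` into the field of rational functions `ℚ(x)`. -/
noncomputable def toRF : Polynomial ℤ →+* RatFunc ℚ :=
  (algebraMap (Polynomial ℚ) (RatFunc ℚ)).comp (Polynomial.mapRingHom (Int.castRingHom ℚ))

noncomputable def Gq (a b : ℤ) (n : ℕ) : Polynomial ℚ :=
  (polyF a b n).map (Int.castRingHom ℚ)

lemma Gq_zero (a b : ℤ) : Gq a b 0 = 0 := by simp [Gq, show polyF a b 0 = 0 from rfl]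
lemma Gq_one (a b : ℤ) : Gq a b 1 = 1 := by simp [Gq, show polyF a b 1 = 1 from rfl]
lemma Gq_add_two (a b : ℤ) (n : ℕ) :
    Gq a b (n + 2) = C (a:ℚ) * X * Gq a b (n + 1) + C (b:ℚ) * Gq a b n := by
  simp [Gq, show polyF a b (n+2) = C a * X * polyF a b (n + 1) + C b * polyF a b n from rfl,
    Polynomial.map_add, Polynomial.map_mul]

lemma Gq_deg (a b : ℤ) (ha : (a:ℚ) ≠ 0) : ∀ n : ℕ,
    (Gq a b (n+1)).degree = n ∧ (Gq a b (n+1)).leadingCoeff = (a:ℚ)^n := by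
  intro n
  induction n using Nat.strong_induction_on with
  | _ n IH =>
    match n with
    | 0 => simp [Gq_one]
    | 1 =>
      rw [Gq_add_two, Gq_zero, Gq_one]
      constructor
      · simpa using degree_C_mul_X ha
      · simp only [mul_one, mul_zero, add_zero, leadingCoeff_mul, leadingCoeff_C, leadingCoeff_X]
        ring
    | (n+2) =>
      obtain ⟨hd1, hl1⟩ := IH (n+1) (by omega)
      obtain ⟨hd0, _⟩ := IH n (by omega)
      have hG : Gq a b (n+1+1) ≠ 0 :=
        leadingCoeff_ne_zero.mp (by rw [hl1]; exact pow_ne_zero _ ha)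
      have ht1 : (C (a:ℚ) * X * Gq a b (n+2)).degree = ((n+2 : ℕ) : WithBot ℕ) := by
        rw [degree_mul, degree_C_mul_X ha, hd1]
        push_cast
        ring
      have ht2 : (C (b:ℚ) * Gq a b (n+1)).degree < ((n+2 : ℕ) : WithBot ℕ) := by
        calc (C (b:ℚ) * Gq a b (n+1)).degree ≤ (C (b:ℚ)).degree + (Gq a b (n+1)).degree :=
              degree_mul_le _ _
        _ ≤ 0 + ((n:ℕ) : WithBot ℕ) := by
              exact add_le_add degree_C_le (le_of_eq hd0)
        _ < ((n+2 : ℕ) : WithBot ℕ) := by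
              rw [zero_add]; exact_mod_cast by omega
      constructor
      · rw [Gq_add_two, degree_add_eq_left_of_degree_lt (by rw [ht1]; exact ht2), ht1]
      · rw [Gq_add_two, add_comm, leadingCoeff_add_of_degree_lt (by rw [ht1]; exact ht2)]
        rw [leadingCoeff_mul, leadingCoeff_mul, leadingCoeff_C, leadingCoeff_X, hl1]
        ring

lemma Gq_ne_zero (a b : ℤ) (ha : (a:ℚ) ≠ 0) (n : ℕ) : Gq a b (n+1) ≠ 0 :=
  leadingCoeff_ne_zero.mp (by rw [(Gq_deg a b ha n).2]; exact pow_ne_zero _ ha)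

lemma Gq_natDegree (a b : ℤ) (ha : (a:ℚ) ≠ 0) (n : ℕ) : (Gq a b (n+1)).natDegree = n :=
  natDegree_eq_of_degree_eq_some (Gq_deg a b ha n).1

lemma cassini (a b : ℤ) (i : ℕ) :
    Gq a b (i+1)^2 - C (a:ℚ) * X * Gq a b i * Gq a b (i+1) - C (b:ℚ) * Gq a b i ^ 2
      = C ((-(b:ℚ))^i) := by
  induction i with
  | zero => simp [Gq_zero, Gq_one]
  | succ n ih =>
    rw [show (-(b:ℚ))^(n+1) = -(b:ℚ) * (-(b:ℚ))^n from by ring, map_mul, map_neg, Gq_add_two]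
    linear_combination (-(C ((b:ℚ)))) * ih

lemma pow_div_two_dvd (a b : ℤ) (hba : b ∣ a) : ∀ i : ℕ, (C b)^(i/2) ∣ polyF a b i := by
  intro i
  induction i using Nat.strong_induction_on with
  | _ i IH =>
    match i with
    | 0 => simp [show polyF a b 0 = 0 from rfl]
    | 1 => simp [show polyF a b 1 = 1 from rfl]
    | (i+2) =>
      obtain ⟨c, hc⟩ := hba
      rw [show polyF a b (i+2) = C a * X * polyF a b (i + 1) + C b * polyF a b i from rfl]
      have h2 : (i+2)/2 = i/2 + 1 := by omega
      rw [h2]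
      apply dvd_add
      · obtain ⟨K, hK⟩ := IH (i+1) (by omega)
        have hle : (C b : Polynomial ℤ)^(i/2) ∣ (C b)^((i+1)/2) := pow_dvd_pow _ (by omega)
        obtain ⟨L, hL⟩ := hle.trans ⟨K, hK⟩
        refine ⟨C c * X * L, ?_⟩
        rw [hL, hc, pow_succ]
        push_cast [map_mul]
        ring
      · obtain ⟨K, hK⟩ := IH i (by omega)
        exact ⟨K, by rw [hK, pow_succ]; ring⟩

lemma prod_dvd (a b : ℤ) (hba : b ∣ a) (i : ℕ) :
    ∃ H : Polynomial ℤ, polyF a b i * polyF a b (i+1) = C (b^i) * H := by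
  have h1 := pow_div_two_dvd a b hba i
  have h2 := pow_div_two_dvd a b hba (i+1)
  obtain ⟨K, hK⟩ := h1
  obtain ⟨L, hL⟩ := h2
  refine ⟨K * L, ?_⟩
  rw [hK, hL]
  have key : (C (b^i) : Polynomial ℤ) = C b ^ (i/2) * C b ^ ((i+1)/2) := by
    rw [map_pow, ← pow_add, show i/2 + (i+1)/2 = i from by omega]
  rw [key]
  ring

lemma base_u0 (a b : ℤ) (v : Polynomial ℚ) (c : ℚ)
    (hD : v^2 - C (a:ℚ) * X * 0 * v - C (b:ℚ) * 0^2 = C c) :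
    ∃ i : ℕ, ∃ l : ℚ, (0 : Polynomial ℚ) = C l * Gq a b i ∧ v = C l * Gq a b (i+1) := by
  have hvv : v * v = C c := by linear_combination hD
  have hdeg : v.degree ≤ 0 := by
    by_cases hv0 : v = 0
    · simp [hv0]
    · have h2 : v.degree + v.degree = (C c).degree := by rw [← degree_mul, hvv]
      have h3 : v.degree + v.degree ≤ 0 := h2 ▸ degree_C_le
      rcases Polynomial.degree_eq_natDegree hv0 with h4
      rw [h4] at h3
      have h6 : v.natDegree = 0 := by
        have h5 : v.natDegree + v.natDegree ≤ 0 := by exact_mod_cast h3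
        omega
      rw [h4, h6]
      simp
  refine ⟨0, v.coeff 0, ?_, ?_⟩
  · simp [Gq_zero]
  · rw [show (0:ℕ)+1 = 1 from rfl, Gq_one, mul_one]
    exact eq_C_of_degree_le_zero hdeg

lemma eqdeg_contra (a b : ℤ) (ha : (a:ℚ) ≠ 0) (u v : Polynomial ℚ) (hu : u ≠ 0) (hv : v ≠ 0)
    (hdeg : u.natDegree = v.natDegree) (c : ℚ)
    (hD : v^2 - C (a:ℚ) * X * u * v - C (b:ℚ) * u^2 = C c) : False := by
  set m := u.natDegree with hm
  have e := congrArg (fun p : Polynomial ℚ => coeff p (2*m+1)) hD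
  simp only [coeff_sub] at e
  have h1 : (v^2).coeff (2*m+1) = 0 := by
    apply coeff_eq_zero_of_natDegree_lt
    calc (v^2).natDegree ≤ 2 * v.natDegree := natDegree_pow_le
    _ < 2*m+1 := by omega
  have h2 : (C (b:ℚ) * u^2).coeff (2*m+1) = 0 := by
    apply coeff_eq_zero_of_natDegree_lt
    calc (C (b:ℚ) * u^2).natDegree ≤ (C (b:ℚ)).natDegree + (u^2).natDegree := natDegree_mul_le
    _ ≤ 0 + 2 * u.natDegree := add_le_add (le_of_eq (natDegree_C _)) natDegree_pow_le
    _ < 2*m+1 := by omega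
  have h3 : (C (a:ℚ) * X * u * v).coeff (2*m+1)
      = (a:ℚ) * (u.leadingCoeff * v.leadingCoeff) := by
    rw [show C (a:ℚ) * X * u * v = C (a:ℚ) * (X * (u * v)) from by ring, coeff_C_mul,
      show 2*m+1 = (u.natDegree + v.natDegree) + 1 from by omega, coeff_X_mul,
      coeff_mul_degree_add_degree]
  rw [h1, h2, h3, coeff_C, if_neg (by omega)] at e
  have := mul_ne_zero ha (mul_ne_zero (leadingCoeff_ne_zero.mpr hu) (leadingCoeff_ne_zero.mpr hv))
  apply this
  linarith [e]

lemma classify (a b : ℤ) (ha : (a:ℚ) ≠ 0) (hb : (b:ℚ) ≠ 0) : ∀ N : ℕ, ∀ u v : Polynomial ℚ,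
    2*(u.natDegree + v.natDegree) + (if u.natDegree ≤ v.natDegree then 0 else 1) ≤ N →
    v ≠ 0 → ∀ c : ℚ,
    v^2 - C (a:ℚ) * X * u * v - C (b:ℚ) * u^2 = C c →
    (∃ i : ℕ, ∃ l : ℚ, u = C l * Gq a b i ∧ v = C l * Gq a b (i+1)) ∨
    (∃ i : ℕ, ∃ l : ℚ, 1 ≤ i ∧ u = -(C l * Gq a b (i+1)) ∧ v = C l * (C (b:ℚ) * Gq a b i)) := by
  have hCb : (C (b:ℚ) : Polynomial ℚ) ≠ 0 := fun h => hb (by simpa using h)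
  intro N
  induction N with
  | zero =>
    intro u v hm hv c hD
    rcases eq_or_ne u 0 with hu | hu
    · subst hu; exact Or.inl (base_u0 a b v c hD)
    · exfalso
      have hdeg : u.natDegree = v.natDegree := by
        rcases le_or_gt u.natDegree v.natDegree with h | h
        · rw [if_pos h] at hm; omega
        · rw [if_neg (by omega)] at hm; omega
      exact eqdeg_contra a b ha u v hu hv hdeg c hD
  | succ N IH =>
    intro u v hm hv c hD
    rcases eq_or_ne u 0 with hu | hu
    · subst hu; exact Or.inl (base_u0 a b v c hD)
    rcases lt_trichotomy u.natDegree v.natDegree with hlt | heq | hgt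
    · -- descent case: deg u < deg v
      set m := u.natDegree with hmdef
      set n := v.natDegree with hndef
      have hn1 : 1 ≤ n := by omega
      -- coefficient at 2n
      have e := congrArg (fun p : Polynomial ℚ => coeff p (2*n)) hD
      simp only [coeff_sub] at e
      have h1 : (v^2).coeff (2*n) = v.leadingCoeff^2 := by
        rw [sq, sq, show 2*n = v.natDegree + v.natDegree from by omega,
          coeff_mul_degree_add_degree]
      have h2 : (C (b:ℚ) * u^2).coeff (2*n) = 0 := by
        apply coeff_eq_zero_of_natDegree_lt
        calc (C (b:ℚ) * u^2).natDegree ≤ (C (b:ℚ)).natDegree + (u^2).natDegree :=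
              natDegree_mul_le
        _ ≤ 0 + 2 * u.natDegree := add_le_add (le_of_eq (natDegree_C _)) natDegree_pow_le
        _ < 2*n := by omega
      have h3 : (C (a:ℚ) * X * u * v).coeff (2*n) = (a:ℚ) * ((u*v).coeff (2*n-1)) := by
        rw [show C (a:ℚ) * X * u * v = C (a:ℚ) * (X * (u * v)) from by ring, coeff_C_mul,
          show 2*n = (2*n-1) + 1 from by omega, coeff_X_mul]
        norm_num
      have hCc : (C c).coeff (2*n) = 0 := by rw [coeff_C, if_neg (by omega)]
      rw [h1, h2, h3, hCc] at e
      have hlv : v.leadingCoeff ≠ 0 := leadingCoeff_ne_zero.mpr hv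
      have hn2 : n = m + 1 := by
        by_contra hne
        have hgap : u.natDegree + v.natDegree < 2*n - 1 := by omega
        rw [coeff_eq_zero_of_natDegree_lt (lt_of_le_of_lt natDegree_mul_le hgap)] at e
        simp at e
        exact hv e
      have h4 : (u*v).coeff (2*n-1) = u.leadingCoeff * v.leadingCoeff := by
        rw [show 2*n-1 = u.natDegree + v.natDegree from by omega, coeff_mul_degree_add_degree]
      rw [h4] at e
      have hlead : v.leadingCoeff = (a:ℚ) * u.leadingCoeff := by
        have : v.leadingCoeff * (v.leadingCoeff - (a:ℚ) * u.leadingCoeff) = 0 := by ring_nf; linarith [e]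
        rcases mul_eq_zero.mp this with h | h
        · exact absurd h hlv
        · linarith [h]
      -- the reduced polynomial w
      set w : Polynomial ℚ := v - C (a:ℚ) * X * u with hw
      have hwdeg : w.natDegree ≤ m := by
        apply natDegree_le_iff_coeff_eq_zero.mpr
        intro k hk
        have hk1 : 1 ≤ k := by omega
        have hcoef : (C (a:ℚ) * X * u).coeff k = (a:ℚ) * u.coeff (k-1) := by
          rw [show C (a:ℚ) * X * u = C (a:ℚ) * (X * u) from by ring, coeff_C_mul,
            show k = (k-1)+1 from by omega, coeff_X_mul]
          norm_num
        rw [hw, coeff_sub, hcoef]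
        rcases eq_or_lt_of_le (show m+1 ≤ k from by omega) with hk2 | hk2
        · rw [← hk2]
          rw [show v.coeff (m+1) = v.leadingCoeff from by rw [leadingCoeff, ← hndef, hn2],
            show u.coeff (m+1-1) = u.leadingCoeff from by rw [leadingCoeff, ← hmdef]; norm_num,
            hlead]
          ring
        · rw [coeff_eq_zero_of_natDegree_lt (show v.natDegree < k from by omega),
            coeff_eq_zero_of_natDegree_lt (show u.natDegree < k-1 from by omega)]
          ring
      -- new pair (w, C b * u)
      have hv' : C (b:ℚ) * u ≠ 0 := mul_ne_zero hCb hu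
      have hD' : (C (b:ℚ) * u)^2 - C (a:ℚ) * X * w * (C (b:ℚ) * u) - C (b:ℚ) * w^2
          = C (-((b:ℚ)*c)) := by
        rw [map_neg, map_mul, hw]
        linear_combination (-(C (b:ℚ))) * hD
      have hmeas : 2*(w.natDegree + (C (b:ℚ) * u).natDegree)
          + (if w.natDegree ≤ (C (b:ℚ) * u).natDegree then 0 else 1) ≤ N := by
        rw [natDegree_C_mul hb]
        have hmold : 2*(m + n) ≤ N + 1 := by rw [if_pos (by omega)] at hm; omega
        split <;> omega
      rcases IH w (C (b:ℚ) * u) hmeas hv' _ hD' with ⟨i, l, hw1, hw2⟩ | ⟨j, l, hj, hw1, hw2⟩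
      · -- w = C l * G i, C b * u = C l * G (i+1)
        have hll : (C l : Polynomial ℚ) = C (l*(b:ℚ)⁻¹) * C (b:ℚ) := by
          rw [← map_mul]; congr 1; field_simp
        have hueq : u = C (l*(b:ℚ)⁻¹) * Gq a b (i+1) := by
          apply mul_left_cancel₀ hCb
          rw [hw2, hll]; ring
        have hveq : v = C (l*(b:ℚ)⁻¹) * Gq a b (i+2) := by
          have : v = C (a:ℚ) * X * u + w := by rw [hw]; ring
          rw [this, hueq, hw1, Gq_add_two, hll]
          ring
        exact Or.inl ⟨i+1, l*(b:ℚ)⁻¹, hueq, hveq⟩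
      · -- w = -(C l * G (j+1)), C b * u = C l * (C b * G j), j ≥ 1
        have hueq : u = C l * Gq a b j := by
          apply mul_left_cancel₀ hCb
          rw [hw2]; ring
        obtain ⟨k, rfl⟩ : ∃ k, j = k + 1 := ⟨j - 1, by omega⟩
        have hveq : v = C (-l) * (C (b:ℚ) * Gq a b k) := by
          have : v = C (a:ℚ) * X * u + w := by rw [hw]; ring
          rw [this, hueq, hw1, Gq_add_two, map_neg]
          ring
        rcases Nat.eq_zero_or_pos k with rfl | hk
        · exfalso; apply hv; rw [hveq, Gq_zero]; ring
        · refine Or.inr ⟨k, -l, hk, ?_, hveq⟩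
          rw [hueq, map_neg]; ring
    · exact absurd (eqdeg_contra a b ha u v hu hv heq c hD) (fun h => h)
    · -- swap case: deg v < deg u
      have hv' : C (b:ℚ) * u ≠ 0 := mul_ne_zero hCb hu
      have hD' : (C (b:ℚ) * u)^2 - C (a:ℚ) * X * (-v) * (C (b:ℚ) * u) - C (b:ℚ) * (-v)^2
          = C (-((b:ℚ)*c)) := by
        rw [map_neg, map_mul]
        linear_combination (-(C (b:ℚ))) * hD
      have hmeas : 2*((-v).natDegree + (C (b:ℚ) * u).natDegree)
          + (if (-v).natDegree ≤ (C (b:ℚ) * u).natDegree then 0 else 1) ≤ N := by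
        rw [natDegree_C_mul hb, natDegree_neg]
        rw [if_neg (by omega)] at hm
        rw [if_pos (by omega)]
        omega
      rcases IH (-v) (C (b:ℚ) * u) hmeas hv' _ hD' with ⟨i, l, hw1, hw2⟩ | ⟨j, l, hj, hw1, hw2⟩
      · -- -v = C l * G i, C b * u = C l * G (i+1)
        have hll : (C l : Polynomial ℚ) = C (l*(b:ℚ)⁻¹) * C (b:ℚ) := by
          rw [← map_mul]; congr 1; field_simp
        have hueq : u = -(C (-(l*(b:ℚ)⁻¹)) * Gq a b (i+1)) := by
          apply mul_left_cancel₀ hCb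
          rw [hw2, hll, map_neg]; ring
        have hveq : v = C (-(l*(b:ℚ)⁻¹)) * (C (b:ℚ) * Gq a b i) := by
          have : v = -(-v) := by ring
          rw [this, hw1, hll, map_neg]; ring
        rcases Nat.eq_zero_or_pos i with rfl | hi
        · exfalso; apply hv; rw [hveq, Gq_zero]; ring
        · exact Or.inr ⟨i, -(l*(b:ℚ)⁻¹), hi, hueq, hveq⟩
      · -- -v = -(C l * G (j+1)), C b * u = C l * (C b * G j)
        have hueq : u = C l * Gq a b j := by
          apply mul_left_cancel₀ hCb
          rw [hw2]; ring
        have hveq : v = C l * Gq a b (j+1) := by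
          have : v = -(-v) := by ring
          rw [this, hw1]; ring
        exact Or.inl ⟨j, l, hueq, hveq⟩

lemma cop_add_mul {R : Type*} [CommRing R] {x y : R} (h : IsCoprime x y) (z : R) :
    IsCoprime x (y + x * z) := by
  obtain ⟨s, t, hst⟩ := h
  exact ⟨s - t * z, t, by linear_combination hst⟩

lemma toRF_eq (p : Polynomial ℤ) :
    toRF p = algebraMap (Polynomial ℚ) (RatFunc ℚ) (p.map (Int.castRingHom ℚ)) := rfl

lemma toRF_polyF (a b : ℤ) (i : ℕ) :
    toRF (polyF a b i) = algebraMap (Polynomial ℚ) (RatFunc ℚ) (Gq a b i) := rfl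

lemma toRF_CaX (a : ℤ) :
    toRF (C a * X) = algebraMap (Polynomial ℚ) (RatFunc ℚ) (C (a:ℚ) * X) := by
  rw [toRF_eq]
  simp

lemma toRF_Cb (b : ℤ) :
    toRF (C b) = algebraMap (Polynomial ℚ) (RatFunc ℚ) (C (b:ℚ)) := by
  rw [toRF_eq]
  simp

lemma den_eq (a b : ℤ) (u v : Polynomial ℚ) (hv : v ≠ 0) :
    1 - algebraMap (Polynomial ℚ) (RatFunc ℚ) (C (a:ℚ) * X)
        * (algebraMap (Polynomial ℚ) (RatFunc ℚ) u / algebraMap (Polynomial ℚ) (RatFunc ℚ) v)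
      - algebraMap (Polynomial ℚ) (RatFunc ℚ) (C (b:ℚ))
        * (algebraMap (Polynomial ℚ) (RatFunc ℚ) u / algebraMap (Polynomial ℚ) (RatFunc ℚ) v)^2
    = algebraMap (Polynomial ℚ) (RatFunc ℚ) (v^2 - C (a:ℚ) * X * u * v - C (b:ℚ) * u^2)
      / algebraMap (Polynomial ℚ) (RatFunc ℚ) (v^2) := by
  have hv' : algebraMap (Polynomial ℚ) (RatFunc ℚ) v ≠ 0 := RatFunc.algebraMap_ne_zero hv
  rw [map_sub, map_sub, map_mul, map_mul, map_mul, map_pow]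
  field_simp
  simp only [map_mul, map_pow]
  ring

lemma quot_eq (a b : ℤ) (u v : Polynomial ℚ) (hv : v ≠ 0) (c : ℚ) (hc : c ≠ 0)
    (hD : v^2 - C (a:ℚ) * X * u * v - C (b:ℚ) * u^2 = C c) :
    (algebraMap (Polynomial ℚ) (RatFunc ℚ) u / algebraMap (Polynomial ℚ) (RatFunc ℚ) v)
      / (1 - algebraMap (Polynomial ℚ) (RatFunc ℚ) (C (a:ℚ) * X)
          * (algebraMap (Polynomial ℚ) (RatFunc ℚ) u / algebraMap (Polynomial ℚ) (RatFunc ℚ) v)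
        - algebraMap (Polynomial ℚ) (RatFunc ℚ) (C (b:ℚ))
          * (algebraMap (Polynomial ℚ) (RatFunc ℚ) u / algebraMap (Polynomial ℚ) (RatFunc ℚ) v)^2)
    = algebraMap (Polynomial ℚ) (RatFunc ℚ) (C c⁻¹ * (u * v)) := by
  have hv' : algebraMap (Polynomial ℚ) (RatFunc ℚ) v ≠ 0 := RatFunc.algebraMap_ne_zero hv
  have hc' : algebraMap (Polynomial ℚ) (RatFunc ℚ) (C c) ≠ 0 :=
    RatFunc.algebraMap_ne_zero (fun h => hc (by simpa using h))
  rw [den_eq a b u v hv, hD]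
  rw [map_pow]
  field_simp
  have hcc : C c * (C (1/c) * (u*v)) = u * v := by
    rw [← mul_assoc, ← map_mul, mul_one_div_cancel hc, map_one, one_mul]
  rw [← map_mul (algebraMap ℚ[X] (RatFunc ℚ)) (C c), hcc, map_mul]

lemma scalar_id (b : ℚ) (hb : b ≠ 0) (i : ℕ) : ((-b)^i)⁻¹ * b^i = (-1)^i := by
  have h1 : ((-1:ℚ)^i)⁻¹ = (-1:ℚ)^i := by
    rcases Nat.even_or_odd i with h | h
    · rw [h.neg_one_pow]; norm_num
    · rw [h.neg_one_pow]; norm_num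
  rw [neg_pow, mul_inv, h1, mul_assoc, inv_mul_cancel₀ (pow_ne_zero i hb), mul_one]

theorem integrality_of_f_at_rational_functions
    (a b : ℤ) (ha : 0 < a) (hb : 0 < b) (hba : b ∣ a) (q : RatFunc ℚ)
    (hden : 1 - toRF (C a * X) * q - toRF (C b) * q ^ 2 ≠ 0) :
    (∃ p : Polynomial ℤ,
        q / (1 - toRF (C a * X) * q - toRF (C b) * q ^ 2) = toRF p) ↔
      ((∃ i : ℕ, q = toRF (polyF a b i) / toRF (polyF a b (i + 1))) ∨
        (∃ i : ℕ, 0 < i ∧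
          q = -(toRF (polyF a b (i + 1)) / (toRF (C b) * toRF (polyF a b i))))) := by
  have ha' : (a:ℚ) ≠ 0 := Int.cast_ne_zero.mpr (ne_of_gt ha)
  have hb' : (b:ℚ) ≠ 0 := Int.cast_ne_zero.mpr (ne_of_gt hb)
  have hCb : (C (b:ℚ) : Polynomial ℚ) ≠ 0 := fun h => hb' (by simpa using h)
  constructor
  · rintro ⟨p, hp⟩
    set u := q.num with hu
    set v := q.denom with hv0
    have hv : v ≠ 0 := q.denom_ne_zero
    have hv' : algebraMap (Polynomial ℚ) (RatFunc ℚ) v ≠ 0 := RatFunc.algebraMap_ne_zero hv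
    have hq : algebraMap (Polynomial ℚ) (RatFunc ℚ) u / algebraMap (Polynomial ℚ) (RatFunc ℚ) v = q :=
      RatFunc.num_div_denom q
    set D := v^2 - C (a:ℚ) * X * u * v - C (b:ℚ) * u^2 with hDdef
    have hden2 : 1 - toRF (C a * X) * q - toRF (C b) * q ^ 2
        = algebraMap (Polynomial ℚ) (RatFunc ℚ) D / algebraMap (Polynomial ℚ) (RatFunc ℚ) (v^2) := by
      rw [toRF_CaX, toRF_Cb, ← hq]
      exact den_eq a b u v hv
    have hDne : D ≠ 0 := by
      intro h
      apply hden
      rw [hden2, h, map_zero, zero_div]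
    have hD' : algebraMap (Polynomial ℚ) (RatFunc ℚ) D ≠ 0 := RatFunc.algebraMap_ne_zero hDne
    set P := p.map (Int.castRingHom ℚ) with hP
    have hmain : q / (algebraMap (Polynomial ℚ) (RatFunc ℚ) D / algebraMap (Polynomial ℚ) (RatFunc ℚ) (v^2))
        = algebraMap (Polynomial ℚ) (RatFunc ℚ) P := by
      rw [← hden2]
      exact hp
    have huv : u * v = P * D := by
      apply IsFractionRing.injective (Polynomial ℚ) (RatFunc ℚ)
      rw [← hq] at hmain
      rw [map_mul, map_mul]
      have hvsq : algebraMap (Polynomial ℚ) (RatFunc ℚ) (v^2) ≠ 0 :=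
        RatFunc.algebraMap_ne_zero (pow_ne_zero 2 hv)
      field_simp at hmain
      apply mul_right_cancel₀ hv'
      rw [map_pow] at hmain
      linear_combination hmain
    have hcop : IsCoprime u v := q.isCoprime_num_denom
    have hDu : IsCoprime u D := by
      have h1 : IsCoprime u (v^2) := hcop.pow_right
      have h2 := cop_add_mul h1 (-(C (a:ℚ) * X * v) - C (b:ℚ) * u)
      have h3 : v^2 + u * (-(C (a:ℚ) * X * v) - C (b:ℚ) * u) = D := by rw [hDdef]; ring
      rwa [h3] at h2
    have hDv : IsCoprime v D := by
      have h0 : IsCoprime v (-(C (b:ℚ)) * u^2) := by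
        have hbu : IsCoprime v (u^2) := hcop.symm.pow_right
        have hunit : IsCoprime v (-(C (b:ℚ))) :=
          ⟨0, -(C (b:ℚ)⁻¹), by
            rw [zero_mul, zero_add, neg_mul_neg, ← map_mul, inv_mul_cancel₀ hb', map_one]⟩
        exact hunit.mul_right hbu
      have h2 := cop_add_mul h0 (v - C (a:ℚ) * X * u)
      have h3 : -(C (b:ℚ)) * u^2 + v * (v - C (a:ℚ) * X * u) = D := by rw [hDdef]; ring
      rwa [h3] at h2
    have hDuv : IsCoprime D (u * v) := hDu.symm.mul_right hDv.symm
    obtain ⟨s, t, hst⟩ := hDuv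
    have hunit : IsUnit D := by
      apply IsUnit.of_mul_eq_one (a := D) (s + t * P)
      rw [huv] at hst
      linear_combination hst
    obtain ⟨c, hcu, hCc⟩ := Polynomial.isUnit_iff.mp hunit
    rcases classify a b ha' hb'
        (2*(u.natDegree + v.natDegree) + (if u.natDegree ≤ v.natDegree then 0 else 1))
        u v le_rfl hv c (by rw [← hDdef, ← hCc]) with ⟨i, l, hu1, hv1⟩ | ⟨i, l, hi, hu1, hv1⟩
    · left
      refine ⟨i, ?_⟩
      have hl : (C l : Polynomial ℚ) ≠ 0 := by
        intro h0
        apply hv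
        rw [hv1, h0, zero_mul]
      have hl' : algebraMap (Polynomial ℚ) (RatFunc ℚ) (C l) ≠ 0 := RatFunc.algebraMap_ne_zero hl
      rw [← hq, hu1, hv1, map_mul, map_mul, mul_div_mul_left _ _ hl', toRF_polyF, toRF_polyF]
    · right
      refine ⟨i, hi, ?_⟩
      have hl : (C l : Polynomial ℚ) ≠ 0 := by
        intro h0
        apply hv
        rw [hv1, h0, zero_mul]
      have hl' : algebraMap (Polynomial ℚ) (RatFunc ℚ) (C l) ≠ 0 := RatFunc.algebraMap_ne_zero hl
      rw [← hq, hu1, hv1, map_neg, map_mul, map_mul, map_mul, neg_div,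
        mul_div_mul_left _ _ hl', toRF_polyF, toRF_polyF, toRF_Cb]
  · rintro (⟨i, hqe⟩ | ⟨i, hi, hqe⟩)
    · obtain ⟨H, hH⟩ := prod_dvd a b hba i
      refine ⟨C ((-1)^i) * H, ?_⟩
      rw [hqe, toRF_polyF, toRF_polyF, toRF_CaX, toRF_Cb]
      rw [quot_eq a b (Gq a b i) (Gq a b (i+1)) (Gq_ne_zero a b ha' i) ((-(b:ℚ))^i)
        (pow_ne_zero i (neg_ne_zero.mpr hb')) (cassini a b i)]
      rw [toRF_eq]
      congr 1
      have hGmap : Gq a b i * Gq a b (i+1) = C ((b:ℚ)^i) * H.map (Int.castRingHom ℚ) := by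
        rw [Gq, Gq, ← Polynomial.map_mul, hH, Polynomial.map_mul, map_C]
        simp [Int.coe_castRingHom]
      rw [hGmap, Polynomial.map_mul, map_C]
      rw [← mul_assoc, ← map_mul, scalar_id (b:ℚ) hb' i]
      simp [Int.coe_castRingHom, mul_comm]
    · obtain ⟨H, hH⟩ := prod_dvd a b hba i
      refine ⟨C ((-1)^i) * H, ?_⟩
      have hGne : (C (b:ℚ) * Gq a b i : Polynomial ℚ) ≠ 0 := by
        obtain ⟨k, rfl⟩ : ∃ k, i = k + 1 := ⟨i - 1, by omega⟩
        exact mul_ne_zero hCb (Gq_ne_zero a b ha' k)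
      have hqe2 : q = algebraMap (Polynomial ℚ) (RatFunc ℚ) (-(Gq a b (i+1)))
          / algebraMap (Polynomial ℚ) (RatFunc ℚ) (C (b:ℚ) * Gq a b i) := by
        rw [hqe, toRF_polyF, toRF_polyF, toRF_Cb, map_neg, map_mul, neg_div]
      have hDcase : (C (b:ℚ) * Gq a b i)^2 - C (a:ℚ) * X * (-(Gq a b (i+1))) * (C (b:ℚ) * Gq a b i)
          - C (b:ℚ) * (-(Gq a b (i+1)))^2 = C ((-(b:ℚ))^(i+1)) := by
        rw [show ((-(b:ℚ))^(i+1)) = -(b:ℚ) * (-(b:ℚ))^i from by rw [pow_succ]; ring,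
          map_mul, map_neg]
        linear_combination (-(C (b:ℚ))) * cassini a b i
      rw [hqe2, toRF_CaX, toRF_Cb]
      rw [quot_eq a b (-(Gq a b (i+1))) (C (b:ℚ) * Gq a b i) hGne ((-(b:ℚ))^(i+1))
        (pow_ne_zero (i+1) (neg_ne_zero.mpr hb')) hDcase]
      rw [toRF_eq]
      congr 1
      have hGmap : Gq a b i * Gq a b (i+1) = C ((b:ℚ)^i) * H.map (Int.castRingHom ℚ) := by
        rw [Gq, Gq, ← Polynomial.map_mul, hH, Polynomial.map_mul, map_C]
        simp [Int.coe_castRingHom]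
      have hscal : ((-(b:ℚ))^(i+1))⁻¹ * (-((b:ℚ)^(i+1))) = (-1:ℚ)^i := by
        have h1 := scalar_id (b:ℚ) hb' (i+1)
        have h2 : ((-1:ℚ))^(i+1) = -((-1:ℚ)^i) := by rw [pow_succ]; ring
        calc ((-(b:ℚ))^(i+1))⁻¹ * (-((b:ℚ)^(i+1))) = -(((-(b:ℚ))^(i+1))⁻¹ * (b:ℚ)^(i+1)) := by ring
        _ = -((-1:ℚ)^(i+1)) := by rw [h1]
        _ = (-1:ℚ)^i := by rw [h2]; ring
      rw [show (-(Gq a b (i+1)) * (C (b:ℚ) * Gq a b i)) = C (-((b:ℚ))) * (Gq a b i * Gq a b (i+1)) from by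
          rw [map_neg]; ring,
        hGmap, Polynomial.map_mul, map_C]
      rw [← mul_assoc, ← mul_assoc, ← map_mul, ← map_mul,
        show ((-(b:ℚ))^(i+1))⁻¹ * -(b:ℚ) * (b:ℚ)^i = ((-(b:ℚ))^(i+1))⁻¹ * (-((b:ℚ)^(i+1))) from by
          rw [pow_succ]; ring,
        hscal]
      simp [Int.coe_castRingHom, mul_comm]
end

section
/- Suppose b divides a. Let q be a rational function in ℚ(x). Then the element l(q) = (2 - a·x·q)/(1 - a·x·q - b·q²) of ℚ(x) (the denominator 1 - a·x·q - b·q² is a nonzero element of ℚ(x)) is a polynomial with integer coefficients (i.e., lies in the image of ℤ[x] in ℚ(x)) if and only if q = F_i(x)/F_{i+1}(x), q = L_i(x)/L_{i+1}(x), or q = -L_{i+1}(x)/(b·L_i(x)) for some natural number i, or q = -F_{i+1}(x)/(b·F_i(x)) for some positive integer i. -/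
open Polynomial

/-- The polynomial sequence `L_i(x)` in `ℤ[x]`:
`L_0 = 2`, `L_1 = a·x`, `L_{i+2}(x) = a·x·L_{i+1}(x) + b·L_i(x)`. -/
noncomputable def polyL (a b : ℤ) : ℕ → Polynomial ℤ
  | 0 => 2
  | 1 => C a * X
  | n + 2 => C a * X * polyL a b (n + 1) + C b * polyL a b n

section Identities
variable (a b : ℤ)

lemma twoStep (P : ℕ → Prop) (h0 : P 0) (h1 : P 1)
    (hstep : ∀ n, P n → P (n + 1) → P (n + 2)) : ∀ n, P n := by
  have key : ∀ n, P n ∧ P (n + 1) := by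
    intro n
    induction n with
    | zero => exact ⟨h0, h1⟩
    | succ k ih => exact ⟨ih.2, hstep k ih.1 ih.2⟩
  exact fun n => (key n).1

@[simp] lemma polyF_zero : polyF a b 0 = 0 := rfl
@[simp] lemma polyF_one : polyF a b 1 = 1 := rfl
lemma nat_succ2 : ∀ m : ℕ, m + 1 + 1 = m + 2 := fun m => rfl

lemma polyF_rec (n : ℕ) : polyF a b (n + 2) = C a * X * polyF a b (n + 1) + C b * polyF a b n := rfl
@[simp] lemma polyL_zero : polyL a b 0 = 2 := rfl
@[simp] lemma polyL_one : polyL a b 1 = C a * X := rfl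
lemma polyL_rec (n : ℕ) : polyL a b (n + 2) = C a * X * polyL a b (n + 1) + C b * polyL a b n := rfl

-- I8
lemma polyL_eq_F (n : ℕ) : polyL a b (n + 1) = polyF a b (n + 2) + C b * polyF a b n := by
  induction n using twoStep with
  | h0 =>
    rw [show (0:ℕ) + 2 = 2 from rfl, polyL_one, polyF_rec a b 0]
    simp
  | h1 =>
    rw [show (1:ℕ) + 1 = 0 + 2 from rfl, show (1:ℕ) + 2 = 1 + 2 from rfl,
      polyL_rec a b 0, polyF_rec a b 1, polyF_rec a b 0]
    simp; ring
  | hstep n ih1 ih2 =>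
    rw [show n + 2 + 1 = (n + 1) + 2 from by ring, polyL_rec a b (n + 1), ih1, ih2,
      show n + 2 + 2 = (n + 2) + 2 from rfl, polyF_rec a b (n + 2), polyF_rec a b n]
    ring

-- I3
lemma polyL_add_AF (n : ℕ) : polyL a b n + C a * X * polyF a b n = 2 * polyF a b (n + 1) := by
  cases n with
  | zero => simp
  | succ k =>
    rw [polyL_eq_F, polyF_rec]
    ring

-- I2'
lemma polyL_sub_AF (n : ℕ) :
    polyL a b (n + 1) - C a * X * polyF a b (n + 1) = 2 * C b * polyF a b n := by
  rw [polyL_eq_F, polyF_rec]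
  ring

-- addition formula
lemma polyF_add_formula : ∀ m n : ℕ, polyF a b (m + n + 1) =
    polyF a b (m + 1) * polyF a b (n + 1) + C b * polyF a b m * polyF a b n := by
  intro m
  induction m using twoStep with
  | h0 => intro n; simp
  | h1 =>
    intro n
    rw [show 1 + n + 1 = n + 2 from by ring, polyF_rec a b n, polyF_rec a b 0]
    simp
  | hstep m ih1 ih2 =>
    intro n
    rw [show m + 2 + n + 1 = (m + n + 1) + 2 from by ring, polyF_rec a b (m + n + 1),
      show m + n + 1 + 1 = m + 1 + n + 1 from by ring, ih2 n, ih1 n,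
      show m + 2 + 1 = m + 1 + 2 from by ring, polyF_rec a b (m + 1), polyF_rec a b m]
    ring

-- Cassini
lemma polyF_cassini (n : ℕ) : polyF a b (n + 1) ^ 2 - C a * X * polyF a b (n + 1) * polyF a b n
    - C b * polyF a b n ^ 2 = (-C b) ^ n := by
  induction n with
  | zero => simp
  | succ k ih =>
    rw [polyF_rec, pow_succ]
    linear_combination (-C b : Polynomial ℤ) * ih
-- I5a
lemma polyF_mul_L (n : ℕ) :
    polyF a b (n + 1) * polyL a b n = polyF a b (2 * n + 1) + (-C b) ^ n := by
  have h1 := polyF_cassini a b n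
  have h2 := polyF_add_formula a b n n
  have h3 := polyL_add_AF a b n
  rw [show 2 * n + 1 = n + n + 1 from by ring, h2]
  linear_combination polyF a b (n + 1) * h3 + h1

-- I5b
lemma polyF_mul_L' (n : ℕ) :
    polyF a b n * polyL a b (n + 1) = polyF a b (2 * n + 1) - (-C b) ^ n := by
  have h1 := polyF_cassini a b n
  have h2 := polyF_add_formula a b n n
  have h3 := polyL_eq_F a b n
  have h4 := polyF_rec a b n
  rw [show 2 * n + 1 = n + n + 1 from by ring, h2]
  linear_combination polyF a b n * h3 + polyF a b n * h4 - h1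

-- I9
lemma polyF_even (n : ℕ) : polyF a b (2 * n) = polyF a b n * polyL a b n := by
  cases n with
  | zero => simp
  | succ k =>
    have h2 := polyF_add_formula a b k (k + 1)
    have h3 := polyL_eq_F a b k
    simp only [nat_succ2] at h2
    rw [show 2 * (k + 1) = k + (k + 1) + 1 from by ring, h2]
    linear_combination -polyF a b (k+1) * h3

-- Pell
lemma polyL_pell (n : ℕ) :
    polyL a b n ^ 2 - ((C a * X) ^ 2 + 4 * C b) * polyF a b n ^ 2 = 4 * (-C b) ^ n := by
  cases n with
  | zero => simp; ring
  | succ k =>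
    have h1 := polyL_add_AF a b (k + 1)
    have h2 := polyL_sub_AF a b k
    have h3 := polyF_cassini a b k
    have h4 := polyF_rec a b k
    simp only [nat_succ2] at h1
    rw [pow_succ]
    linear_combination (polyL a b (k+1) - C a * X * polyF a b (k+1)) * h1
      + (2 * polyF a b (k+2)) * h2 - 4 * C b * h3 + 4 * C b * polyF a b k * h4

-- Cassini for L
lemma polyL_cassini (n : ℕ) :
    polyL a b (n + 1) ^ 2 - C a * X * polyL a b (n + 1) * polyL a b n - C b * polyL a b n ^ 2
      = -((C a * X) ^ 2 + 4 * C b) * (-C b) ^ n := by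
  induction n with
  | zero => simp; ring
  | succ k ih =>
    rw [polyL_rec, pow_succ]
    linear_combination (-C b : Polynomial ℤ) * ih

-- E1
lemma polyE1 (n : ℕ) :
    C a * X * polyL a b n + ((C a * X) ^ 2 + 4 * C b) * polyF a b n = 2 * polyL a b (n + 1) := by
  have h1 := polyL_add_AF a b n
  have h2 := polyL_eq_F a b n
  have h3 := polyF_rec a b n
  linear_combination C a * X * h1 - 2 * h2 - 2 * h3

-- E3
lemma polyE3 (n : ℕ) :
    C a * X * polyL a b (n + 1) - ((C a * X) ^ 2 + 4 * C b) * polyF a b (n + 1)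
      = -(2 * C b) * polyL a b n := by
  have h1 := polyL_sub_AF a b n
  have h2 := polyL_add_AF a b n
  linear_combination (C a * X) * h1 + 2 * C b * h2

-- E4
lemma polyE4 (n : ℕ) :
    C a * X * polyL a b (n + 1) + 2 * C b * polyL a b n
      = ((C a * X) ^ 2 + 4 * C b) * polyF a b (n + 1) := by
  have h1 := polyL_sub_AF a b n
  have h2 := polyL_add_AF a b n
  linear_combination (C a * X) * h1 + 2 * C b * h2

-- divisibility
lemma polyF_div (hba : b ∣ a) (n : ℕ) :
    C (b ^ n) ∣ polyF a b (2 * n) ∧ C (b ^ n) ∣ polyF a b (2 * n + 1) := by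
  obtain ⟨a', ha'⟩ := hba
  induction n with
  | zero => simp
  | succ k ih =>
    obtain ⟨⟨u, hu⟩, v, hv⟩ := ih
    have h1 : polyF a b (2 * (k + 1)) = C a * X * polyF a b (2 * k + 1) + C b * polyF a b (2 * k) := by
      rw [show 2 * (k + 1) = 2 * k + 2 from by ring]
      exact polyF_rec a b (2 * k)
    have h2 : polyF a b (2 * (k + 1) + 1)
        = C a * X * polyF a b (2 * (k + 1)) + C b * polyF a b (2 * k + 1) := by
      rw [show 2 * (k + 1) + 1 = 2 * k + 1 + 2 from by ring,
        show 2 * (k + 1) = 2 * k + 1 + 1 from by ring]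
      exact polyF_rec a b (2 * k + 1)
    constructor
    · rw [h1, hu, hv, ha']
      exact ⟨C a' * X * v + u, by simp only [C_mul, C_pow, pow_succ]; ring⟩
    · rw [h2, h1, hu, hv, ha']
      exact ⟨C a' * X * (C (b * a') * X * v + C b * u) + v, by
        simp only [C_mul, C_pow, pow_succ]; ring⟩

-- positivity of evaluations at 1
lemma polyF_eval_pos (ha : 0 < a) (hb : 0 < b) :
    ∀ n, 0 ≤ (polyF a b n).eval 1 ∧ 0 < (polyF a b (n + 1)).eval 1 := by
  intro n
  induction n with
  | zero => simp
  | succ k ih =>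
    refine ⟨le_of_lt ih.2, ?_⟩
    rw [polyF_rec]
    simp only [eval_add, eval_mul, eval_C, eval_X, mul_one]
    nlinarith [ih.1, ih.2]

lemma polyL_eval_pos (ha : 0 < a) (hb : 0 < b) :
    ∀ n, 0 < (polyL a b n).eval 1 := by
  have key : ∀ n, 0 < (polyL a b n).eval 1 ∧ 0 < (polyL a b (n + 1)).eval 1 := by
    intro n
    induction n with
    | zero => simp; positivity
    | succ k ih =>
      refine ⟨ih.2, ?_⟩
      rw [polyL_rec]
      simp only [eval_add, eval_mul, eval_C, eval_X, mul_one]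
      nlinarith [ih.1, ih.2]
  exact fun n => (key n).1

lemma polyF_ne_zero (ha : 0 < a) (hb : 0 < b) (n : ℕ) : polyF a b (n + 1) ≠ 0 := fun h => by
  have := (polyF_eval_pos a b ha hb n).2
  rw [h] at this; simp at this

lemma polyL_ne_zero (ha : 0 < a) (hb : 0 < b) (n : ℕ) : polyL a b n ≠ 0 := fun h => by
  have := polyL_eval_pos a b ha hb n
  rw [h] at this; simp at this

end Identities

section QLayer
variable (a b : ℤ)

noncomputable def Fq (n : ℕ) : Polynomial ℚ := (polyF a b n).map (Int.castRingHom ℚ)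
noncomputable def Lq (n : ℕ) : Polynomial ℚ := (polyL a b n).map (Int.castRingHom ℚ)

@[simp] lemma Fq_zero : Fq a b 0 = 0 := by simp [Fq]
@[simp] lemma Fq_one : Fq a b 1 = 1 := by simp [Fq]
@[simp] lemma Lq_zero : Lq a b 0 = 2 := by simp [Lq]
@[simp] lemma Lq_one : Lq a b 1 = C (a:ℚ) * X := by simp [Lq]

lemma Lq_sub (n : ℕ) :
    Lq a b (n + 1) - C (a:ℚ) * X * Fq a b (n + 1) = 2 * C (b:ℚ) * Fq a b n := by
  have := congrArg (Polynomial.map (Int.castRingHom ℚ)) (polyL_sub_AF a b n)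
  simpa [Lq, Fq] using this

lemma Lq_add (n : ℕ) :
    Lq a b n + C (a:ℚ) * X * Fq a b n = 2 * Fq a b (n + 1) := by
  have := congrArg (Polynomial.map (Int.castRingHom ℚ)) (polyL_add_AF a b n)
  simpa [Lq, Fq] using this

lemma E1q (n : ℕ) :
    C (a:ℚ) * X * Lq a b n + ((C (a:ℚ) * X) ^ 2 + 4 * C (b:ℚ)) * Fq a b n
      = 2 * Lq a b (n + 1) := by
  have := congrArg (Polynomial.map (Int.castRingHom ℚ)) (polyE1 a b n)
  simpa [Lq, Fq] using this

lemma E3q (n : ℕ) :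
    C (a:ℚ) * X * Lq a b (n + 1) - ((C (a:ℚ) * X) ^ 2 + 4 * C (b:ℚ)) * Fq a b (n + 1)
      = -(2 * C (b:ℚ)) * Lq a b n := by
  have := congrArg (Polynomial.map (Int.castRingHom ℚ)) (polyE3 a b n)
  simpa [Lq, Fq] using this

lemma PellQ (n : ℕ) :
    Lq a b n ^ 2 - ((C (a:ℚ) * X) ^ 2 + 4 * C (b:ℚ)) * Fq a b n ^ 2
      = 4 * (-C (b:ℚ)) ^ n := by
  have := congrArg (Polynomial.map (Int.castRingHom ℚ)) (polyL_pell a b n)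
  simpa [Lq, Fq] using this

lemma FqL (n : ℕ) :
    Fq a b (n + 1) * Lq a b n = Fq a b (2 * n + 1) + (-C (b:ℚ)) ^ n := by
  have := congrArg (Polynomial.map (Int.castRingHom ℚ)) (polyF_mul_L a b n)
  simpa [Lq, Fq] using this

lemma FqL' (n : ℕ) :
    Fq a b n * Lq a b (n + 1) = Fq a b (2 * n + 1) - (-C (b:ℚ)) ^ n := by
  have := congrArg (Polynomial.map (Int.castRingHom ℚ)) (polyF_mul_L' a b n)
  simpa [Lq, Fq] using this

lemma Fq_even (n : ℕ) : Fq a b (2 * n) = Fq a b n * Lq a b n := by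
  have := congrArg (Polynomial.map (Int.castRingHom ℚ)) (polyF_even a b n)
  simpa [Lq, Fq] using this

lemma Fq_ne_zero (ha : 0 < a) (hb : 0 < b) (n : ℕ) : Fq a b (n + 1) ≠ 0 :=
  (Polynomial.map_ne_zero_iff Int.cast_injective).mpr (polyF_ne_zero a b ha hb n)

lemma Lq_ne_zero (ha : 0 < a) (hb : 0 < b) (n : ℕ) : Lq a b n ≠ 0 :=
  (Polynomial.map_ne_zero_iff Int.cast_injective).mpr (polyL_ne_zero a b ha hb n)

end QLayer

section Descent
variable (a b : ℤ)

lemma descent (ha : 0 < a) (hb : 0 < b) :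
    ∀ (k : ℕ) (Y M : Polynomial ℚ) (c : ℚ), c ≠ 0 → M.natDegree ≤ k →
      Y ^ 2 - ((C (a:ℚ) * X) ^ 2 + 4 * C (b:ℚ)) * M ^ 2 = C c →
      ∃ (n : ℕ) (r : ℚ), r ≠ 0 ∧ Y = C r * Lq a b n ∧
        (M = C r * Fq a b n ∨ M = -(C r) * Fq a b n) := by
  have haQ : (a:ℚ) ≠ 0 := by exact_mod_cast ha.ne'
  have hbQ : (b:ℚ) ≠ 0 := by exact_mod_cast hb.ne'
  have h4b : (4 : Polynomial ℚ) * C (b:ℚ) = C (4 * (b:ℚ)) := by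
    rw [C_mul, map_ofNat]
  intro k
  induction k with
  | zero =>
    intro Y M c hc hdeg hY2
    rcases eq_or_ne M 0 with hM0 | hM0
    · subst hM0
      have hY2' : Y ^ 2 = C c := by linear_combination hY2
      have hdY : Y.natDegree = 0 := by
        have h1 : (Y ^ 2).natDegree = 0 := by rw [hY2']; exact natDegree_C c
        rw [natDegree_pow] at h1; omega
      have hYC : Y = C (Y.coeff 0) := eq_C_of_natDegree_le_zero hdY.le
      set y := Y.coeff 0 with hy
      have hyc : y ^ 2 = c := by
        have : C (y ^ 2) = C c := by rw [C_pow, ← hYC, hY2']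
        exact C_injective this
      have hy0 : y ≠ 0 := fun h => hc (by rw [← hyc, h]; ring)
      refine ⟨0, y / 2, div_ne_zero hy0 two_ne_zero, ?_, Or.inl (by simp)⟩
      rw [Lq_zero, hYC, show (2 : Polynomial ℚ) = C 2 from by rw [map_ofNat], ← C_mul]
      norm_num
    · have hMC : M = C (M.coeff 0) := eq_C_of_natDegree_le_zero hdeg
      set μ := M.coeff 0 with hμ
      have hμ0 : μ ≠ 0 := fun h => hM0 (by rw [hMC, h, C_0])
      have hCC : (C (4 * (b:ℚ) * μ ^ 2 + c) : Polynomial ℚ)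
          = 4 * C (b:ℚ) * (C μ) ^ 2 + C c := by
        simp only [C_add, C_mul, C_pow, map_ofNat]
      rw [hMC] at hY2
      have hPQ : (Y - C (a:ℚ) * X * C μ) * (Y + C (a:ℚ) * X * C μ)
          = C (4 * (b:ℚ) * μ ^ 2 + c) := by
        rw [hCC]; linear_combination hY2
      by_cases hz : 4 * (b:ℚ) * μ ^ 2 + c = 0
      · rw [hz, C_0] at hPQ
        rcases mul_eq_zero.mp hPQ with h | h
        · exact ⟨1, μ, hμ0, by rw [Lq_one]; linear_combination h,
            Or.inl (by rw [Fq_one, hMC]; ring)⟩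
        · exact ⟨1, -μ, neg_ne_zero.mpr hμ0, by rw [Lq_one, C_neg]; linear_combination h,
            Or.inr (by rw [Fq_one, hMC, C_neg]; ring)⟩
      · exfalso
        have hC0 : (C (4 * (b:ℚ) * μ ^ 2 + c) : Polynomial ℚ) ≠ 0 := by
          rwa [Ne, C_eq_zero]
        have h1 : Y - C (a:ℚ) * X * C μ ≠ 0 := left_ne_zero_of_mul (hPQ ▸ hC0)
        have h2 : Y + C (a:ℚ) * X * C μ ≠ 0 := right_ne_zero_of_mul (hPQ ▸ hC0)
        have hsum : (Y - C (a:ℚ) * X * C μ).natDegree + (Y + C (a:ℚ) * X * C μ).natDegree = 0 := by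
          rw [← natDegree_mul h1 h2, hPQ, natDegree_C]
        have hQP : (Y + C (a:ℚ) * X * C μ) - (Y - C (a:ℚ) * X * C μ) = C (2 * (a:ℚ) * μ) * X := by
          simp only [C_mul, map_ofNat]; ring
        have hd1 : ((Y + C (a:ℚ) * X * C μ) - (Y - C (a:ℚ) * X * C μ)).natDegree = 1 := by
          rw [hQP]
          exact natDegree_C_mul_X _ (mul_ne_zero (mul_ne_zero two_ne_zero haQ) hμ0)
        have hle := natDegree_sub_le (Y + C (a:ℚ) * X * C μ) (Y - C (a:ℚ) * X * C μ)
        omega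
  | succ k IH =>
    intro Y M c hc hdeg hY2
    by_cases hMk : M.natDegree ≤ k
    · exact IH Y M c hc hMk hY2
    have hm : M.natDegree = k + 1 := by omega
    have hM0 : M ≠ 0 := fun h => by rw [h, natDegree_zero] at hm; omega
    have key : ∀ Y' M' : Polynomial ℚ, M'.natDegree = k + 1 →
        Y' ^ 2 - ((C (a:ℚ) * X) ^ 2 + 4 * C (b:ℚ)) * M' ^ 2 = C c →
        (Y' - C (a:ℚ) * X * M').natDegree ≤ k →
        ∃ (n : ℕ) (r : ℚ), r ≠ 0 ∧ Y' = C r * Lq a b n ∧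
          (M' = C r * Fq a b n ∨ M' = -(C r) * Fq a b n) := by
      intro Y' M' hm' hY2' hsmall
      set d : Polynomial ℚ := (C (a:ℚ) * X) ^ 2 + 4 * C (b:ℚ) with hd
      set M₁ : Polynomial ℚ := Y' - C (a:ℚ) * X * M' with hM₁def
      set Y₁ : Polynomial ℚ := d * M' - C (a:ℚ) * X * Y' with hY₁def
      have hc' : -4 * (b:ℚ) * c ≠ 0 :=
        mul_ne_zero (mul_ne_zero (by norm_num) hbQ) hc
      have hCc : (C (-4 * (b:ℚ) * c) : Polynomial ℚ) = -(4 * C (b:ℚ) * C c) := by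
        simp only [C_mul, C_neg, map_ofNat]
        ring
      have hX : Y₁ ^ 2 - d * M₁ ^ 2 = C (-4 * (b:ℚ) * c) := by
        rw [hCc, hM₁def, hY₁def, hd]
        linear_combination ((C (a:ℚ) * X) ^ 2 - ((C (a:ℚ) * X) ^ 2 + 4 * C (b:ℚ))) * hY2'
      obtain ⟨n, r, hr, hY₁e, hM₁e⟩ := IH Y₁ M₁ _ hc' hsmall hX
      have hYrec : 4 * C (b:ℚ) * Y' = C (a:ℚ) * X * Y₁ + d * M₁ := by
        rw [hM₁def, hY₁def, hd]; ring
      have hMrec : 4 * C (b:ℚ) * M' = Y₁ + C (a:ℚ) * X * M₁ := by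
        rw [hM₁def, hY₁def]; ring
      have hC4b : (4 : Polynomial ℚ) * C (b:ℚ) ≠ 0 := by
        rw [h4b]; simpa using (by positivity : (4:ℚ) * b ≠ 0)
      have recon : ∀ s : ℚ, s ≠ 0 → Y₁ = C s * Lq a b n → M₁ = C s * Fq a b n →
          ∃ (n' : ℕ) (r' : ℚ), r' ≠ 0 ∧ Y' = C r' * Lq a b n' ∧
            (M' = C r' * Fq a b n' ∨ M' = -(C r') * Fq a b n') := by
        intro s hs hY₁s hM₁s
        have hs' : s / (2 * (b:ℚ)) ≠ 0 := div_ne_zero hs (by simpa using hbQ)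
        have helper1 : (4 : Polynomial ℚ) * C (b:ℚ) * C (s / (2 * (b:ℚ))) = 2 * C s := by
          rw [h4b, ← C_mul, show (4 * (b:ℚ)) * (s / (2 * (b:ℚ))) = 2 * s from by
            field_simp; ring, C_mul, map_ofNat]
        refine ⟨n + 1, s / (2 * (b:ℚ)), hs', ?_, Or.inl ?_⟩
        · apply mul_left_cancel₀ hC4b
          rw [hYrec, hY₁s, hM₁s, hd]
          linear_combination C s * E1q a b n - Lq a b (n + 1) * helper1
        · apply mul_left_cancel₀ hC4b
          rw [hMrec, hY₁s, hM₁s]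
          linear_combination C s * Lq_add a b n - Fq a b (n + 1) * helper1
      rcases hM₁e with hM₁e | hM₁e
      · exact recon r hr hY₁e hM₁e
      · rcases n with _ | m
        · exact recon r hr hY₁e (by rw [hM₁e, Fq_zero, mul_zero, mul_zero])
        · have hr2 : -r / 2 ≠ 0 := div_ne_zero (neg_ne_zero.mpr hr) two_ne_zero
          have helper2 : (4 : Polynomial ℚ) * C (b:ℚ) * C (-r / 2)
              = -(2 * (C (b:ℚ) * C r)) := by
            rw [h4b, ← C_mul, show (4 * (b:ℚ)) * (-r / 2) = -(2 * ((b:ℚ) * r)) from by ring,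
              C_neg, C_mul, C_mul, map_ofNat]
          refine ⟨m, -r / 2, hr2, ?_, Or.inr ?_⟩
          · apply mul_left_cancel₀ hC4b
            rw [hYrec, hY₁e, hM₁e, hd]
            linear_combination C r * E3q a b m - Lq a b m * helper2
          · apply mul_left_cancel₀ hC4b
            rw [hMrec, hY₁e, hM₁e]
            linear_combination C r * Lq_sub a b m + Fq a b m * helper2
    -- degree bookkeeping to decide which factor is small
    have hd2 : (((C (a:ℚ) * X) ^ 2 + 4 * C (b:ℚ)) : Polynomial ℚ).natDegree = 2 := by
      rw [show ((C (a:ℚ) * X) ^ 2 + 4 * C (b:ℚ) : Polynomial ℚ)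
          = C ((a:ℚ) ^ 2) * X ^ 2 + C (4 * (b:ℚ)) from by
        rw [C_pow, C_mul, map_ofNat]; ring]
      rw [natDegree_add_C]
      exact natDegree_C_mul_X_pow 2 _ (pow_ne_zero 2 haQ)
    have hdne : (((C (a:ℚ) * X) ^ 2 + 4 * C (b:ℚ)) : Polynomial ℚ) ≠ 0 := fun h => by
      rw [h, natDegree_zero] at hd2; omega
    have hYY : Y ^ 2 = ((C (a:ℚ) * X) ^ 2 + 4 * C (b:ℚ)) * M ^ 2 + C c := by
      linear_combination hY2
    have hdm : (((C (a:ℚ) * X) ^ 2 + 4 * C (b:ℚ)) * M ^ 2).natDegree = 2 + 2 * (k + 1) := by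
      rw [natDegree_mul hdne (pow_ne_zero 2 hM0), hd2, natDegree_pow, hm]
    have hY1 : Y.natDegree = k + 2 := by
      have h1 : (Y ^ 2).natDegree = 2 + 2 * (k + 1) := by
        rw [hYY, natDegree_add_C, hdm]
      rw [natDegree_pow] at h1; omega
    have hR : (Y - C (a:ℚ) * X * M) * (Y + C (a:ℚ) * X * M) = 4 * C (b:ℚ) * M ^ 2 + C c := by
      linear_combination hY2
    have hRdeg : (4 * C (b:ℚ) * M ^ 2 + C c).natDegree = 2 * (k + 1) := by
      rw [natDegree_add_C, h4b, natDegree_C_mul (by positivity : (4:ℚ) * b ≠ 0),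
        natDegree_pow, hm]
    have hR0 : 4 * C (b:ℚ) * M ^ 2 + C c ≠ 0 := fun h => by
      rw [h, natDegree_zero] at hRdeg; omega
    have hP0 : Y - C (a:ℚ) * X * M ≠ 0 := left_ne_zero_of_mul (hR ▸ hR0)
    have hQ0 : Y + C (a:ℚ) * X * M ≠ 0 := right_ne_zero_of_mul (hR ▸ hR0)
    have hsum : (Y - C (a:ℚ) * X * M).natDegree + (Y + C (a:ℚ) * X * M).natDegree
        = 2 * (k + 1) := by
      rw [← natDegree_mul hP0 hQ0, hR, hRdeg]
    have hPQsum : ((Y - C (a:ℚ) * X * M) + (Y + C (a:ℚ) * X * M)).natDegree = k + 2 := by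
      rw [show (Y - C (a:ℚ) * X * M) + (Y + C (a:ℚ) * X * M) = C 2 * Y from by
        rw [map_ofNat]; ring]
      rw [natDegree_C_mul two_ne_zero, hY1]
    have hchoice : (Y - C (a:ℚ) * X * M).natDegree ≤ k ∨ (Y + C (a:ℚ) * X * M).natDegree ≤ k := by
      by_contra hcon
      push_neg at hcon
      have := natDegree_add_le (Y - C (a:ℚ) * X * M) (Y + C (a:ℚ) * X * M)
      omega
    rcases hchoice with hsmall | hsmall
    · exact key Y M hm hY2 hsmall
    · obtain ⟨n, r, hr, hYe, hMe⟩ := key Y (-M) (by rwa [natDegree_neg])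
        (by rw [show (-M) ^ 2 = M ^ 2 from by ring]; exact hY2)
        (by rw [show Y - C (a:ℚ) * X * -M = Y + C (a:ℚ) * X * M from by ring]; exact hsmall)
      refine ⟨n, r, hr, hYe, ?_⟩
      rcases hMe with h | h
      · exact Or.inr (by linear_combination -h)
      · exact Or.inl (by linear_combination -h)

end Descent

section KeyIdent
variable (a b : ℤ)

lemma hCbi (i : ℕ) : ((-C b : Polynomial ℤ)) ^ i = (-1 : Polynomial ℤ) ^ i * C (b ^ i) := by
  rw [show (-C b : Polynomial ℤ) = -1 * C b from by ring, mul_pow, ← C_pow]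

lemma hsqC (i : ℕ) : ((-1 : Polynomial ℤ)) ^ i * (-1 : Polynomial ℤ) ^ i = 1 := by
  rw [← mul_pow]; norm_num

lemma keyA (i : ℕ) (G : Polynomial ℤ) (hG : polyF a b (2 * i + 1) = C (b ^ i) * G) :
    polyF a b (i + 1) * polyL a b i = (1 + (-1 : Polynomial ℤ) ^ i * G) * (-C b) ^ i := by
  rw [polyF_mul_L, hG, hCbi]
  linear_combination (-(C (b ^ i) * G)) * hsqC i

lemma keyB (i : ℕ) (G : Polynomial ℤ) (hG : polyF a b (2 * i + 1) = C (b ^ i) * G) :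
    polyF a b i * polyL a b (i + 1) = ((-1 : Polynomial ℤ) ^ i * G - 1) * (-C b) ^ i := by
  rw [polyF_mul_L', hG, hCbi]
  linear_combination (-(C (b ^ i) * G)) * hsqC i

lemma famZ1 (i : ℕ) (G : Polynomial ℤ) (hG : polyF a b (2 * i + 1) = C (b ^ i) * G) :
    2 * polyF a b (i + 1) ^ 2 - C a * X * polyF a b i * polyF a b (i + 1)
      = (1 + (-1 : Polynomial ℤ) ^ i * G) *
        (polyF a b (i + 1) ^ 2 - C a * X * polyF a b i * polyF a b (i + 1)
          - C b * polyF a b i ^ 2) := by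
  linear_combination (-(1 + (-1 : Polynomial ℤ) ^ i * G)) * polyF_cassini a b i + keyA a b i G hG
    - polyF a b (i + 1) * polyL_add_AF a b i

lemma famZ2 (i : ℕ) (G : Polynomial ℤ) (hG : polyF a b (2 * i + 1) = C (b ^ i) * G) :
    2 * polyL a b (i + 1) ^ 2 - C a * X * polyL a b i * polyL a b (i + 1)
      = (1 - (-1 : Polynomial ℤ) ^ i * G) *
        (polyL a b (i + 1) ^ 2 - C a * X * polyL a b i * polyL a b (i + 1)
          - C b * polyL a b i ^ 2) := by
  linear_combination (-(1 - (-1 : Polynomial ℤ) ^ i * G)) * polyL_cassini a b i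
    - polyL a b (i + 1) * polyE1 a b i
    + ((C a * X) ^ 2 + 4 * C b) * keyB a b i G hG

lemma famZ3 (i : ℕ) (G : Polynomial ℤ) (hG : polyF a b (2 * i + 1) = C (b ^ i) * G) :
    2 * (C b * polyL a b i) ^ 2 + C a * X * polyL a b (i + 1) * (C b * polyL a b i)
      = (1 + (-1 : Polynomial ℤ) ^ i * G) *
        ((C b * polyL a b i) ^ 2 + C a * X * polyL a b (i + 1) * (C b * polyL a b i)
          - C b * polyL a b (i + 1) ^ 2) := by
  linear_combination (C b * polyL a b i) * polyE4 a b i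
    + ((1 + (-1 : Polynomial ℤ) ^ i * G) * C b) * polyL_cassini a b i
    + (C b * ((C a * X) ^ 2 + 4 * C b)) * keyA a b i G hG

lemma famZ4 (i : ℕ) (G : Polynomial ℤ) (hG : polyF a b (2 * i + 1) = C (b ^ i) * G) :
    2 * (C b * polyF a b i) ^ 2 + C a * X * polyF a b (i + 1) * (C b * polyF a b i)
      = (1 - (-1 : Polynomial ℤ) ^ i * G) *
        ((C b * polyF a b i) ^ 2 + C a * X * polyF a b (i + 1) * (C b * polyF a b i)
          - C b * polyF a b (i + 1) ^ 2) := by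
  linear_combination (-(C b * polyF a b i)) * polyL_sub_AF a b i
    + ((1 - (-1 : Polynomial ℤ) ^ i * G) * C b) * polyF_cassini a b i
    + C b * keyB a b i G hG

end KeyIdent

set_option maxHeartbeats 1000000 in
theorem integrality_of_l_at_rational_functions
    (a b : ℤ) (ha : 0 < a) (hb : 0 < b) (hba : b ∣ a) (q : RatFunc ℚ)
    (hden : 1 - toRF (C a * X) * q - toRF (C b) * q ^ 2 ≠ 0) :
    (∃ p : Polynomial ℤ,
        (2 - toRF (C a * X) * q) / (1 - toRF (C a * X) * q - toRF (C b) * q ^ 2) = toRF p) ↔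
      ((∃ i : ℕ,
          q = toRF (polyF a b i) / toRF (polyF a b (i + 1)) ∨
          q = toRF (polyL a b i) / toRF (polyL a b (i + 1)) ∨
          q = -(toRF (polyL a b (i + 1)) / (toRF (C b) * toRF (polyL a b i)))) ∨
        (∃ i : ℕ, 0 < i ∧
          q = -(toRF (polyF a b (i + 1)) / (toRF (C b) * toRF (polyF a b i))))) := by
  have haQ : (a:ℚ) ≠ 0 := by exact_mod_cast ha.ne'
  have hbQ : (b:ℚ) ≠ 0 := by exact_mod_cast hb.ne'
  set φ := algebraMap (Polynomial ℚ) (RatFunc ℚ) with hφdef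
  have hφinj : Function.Injective φ := IsFractionRing.injective (Polynomial ℚ) (RatFunc ℚ)
  have hφne : ∀ g : Polynomial ℚ, g ≠ 0 → φ g ≠ 0 := fun g hg => by
    simpa using (map_ne_zero_iff φ hφinj).mpr hg
  have htoF : ∀ n, toRF (polyF a b n) = φ (Fq a b n) := fun n => rfl
  have htoL : ∀ n, toRF (polyL a b n) = φ (Lq a b n) := fun n => rfl
  have htoA : toRF (C a * X) = φ (C (a:ℚ) * X) := by
    show φ ((C a * X : Polynomial ℤ).map (Int.castRingHom ℚ)) = _
    norm_num
  have htoB : toRF (C b) = φ (C (b:ℚ)) := by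
    show φ ((C b : Polynomial ℤ).map (Int.castRingHom ℚ)) = _
    norm_num
  have hAne : φ (C (a:ℚ) * X) ≠ 0 := hφne _ (by
    intro h
    have := congrArg (fun r => Polynomial.coeff r 1) h
    simp [coeff_C_mul] at this
    exact haQ (by exact_mod_cast this))
  have hBne : φ (C (b:ℚ)) ≠ 0 := hφne _ (by simpa [C_eq_zero] using hbQ)
  have hFne : ∀ n, φ (Fq a b (n + 1)) ≠ 0 := fun n => hφne _ (Fq_ne_zero a b ha hb n)
  have hLne : ∀ n, φ (Lq a b n) ≠ 0 := fun n => hφne _ (Lq_ne_zero a b ha hb n)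
  have hca : toRF (C a) = ((a : ℤ) : RatFunc ℚ) := by simp [toRF]
  have hcb : toRF (C b) = ((b : ℤ) : RatFunc ℚ) := by simp [toRF]
  constructor
  · rintro ⟨p, hp⟩
    rw [div_eq_iff hden, htoA, htoB] at hp
    set P : Polynomial ℚ := p.map (Int.castRingHom ℚ) with hPdef
    have hp' : 2 - φ (C (a:ℚ) * X) * q
        = φ P * (1 - φ (C (a:ℚ) * X) * q - φ (C (b:ℚ)) * q ^ 2) := hp
    by_cases hP0 : P = 0
    · left
      refine ⟨0, Or.inr (Or.inl ?_)⟩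
      have h2 : (2 : RatFunc ℚ) - φ (C (a:ℚ) * X) * q = 0 := by
        rw [hp', hP0, map_zero, zero_mul]
      rw [htoL, htoL, Lq_zero, Lq_one, map_ofNat, eq_div_iff hAne]
      linear_combination -h2
    · have hPne : φ P ≠ 0 := hφne _ hP0
      -- integrality: the square root is a polynomial
      have hyK2 : (2 * φ (C (b:ℚ)) * φ P * q + φ (C (a:ℚ) * X) * (φ P - 1)) ^ 2
          = φ (((C (a:ℚ) * X) ^ 2 + 4 * C (b:ℚ)) * (P - 1) ^ 2 - 4 * C (b:ℚ)) := by
        have hp'' := hp'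
        simp only [map_mul] at hp''
        simp only [map_sub, map_mul, map_add, map_pow, map_one, map_ofNat]
        linear_combination (4 * φ (C (b:ℚ)) * φ P) * hp''
      obtain ⟨Y, hYint⟩ : ∃ Y : Polynomial ℚ,
          2 * φ (C (b:ℚ)) * φ P * q + φ (C (a:ℚ) * X) * (φ P - 1) = φ Y := by
        have hint : IsIntegral (Polynomial ℚ)
            (2 * φ (C (b:ℚ)) * φ P * q + φ (C (a:ℚ) * X) * (φ P - 1)) := by
          refine ⟨X ^ 2 - C (((C (a:ℚ) * X) ^ 2 + 4 * C (b:ℚ)) * (P - 1) ^ 2 - 4 * C (b:ℚ)),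
            monic_X_pow_sub_C _ (by norm_num), ?_⟩
          simp only [eval₂_sub, eval₂_pow, eval₂_X, eval₂_C]
          rw [hyK2]
          exact sub_self _
        obtain ⟨Y, hY⟩ := IsIntegrallyClosed.isIntegral_iff.mp hint
        exact ⟨Y, hY.symm⟩
      have hYY : Y ^ 2 - ((C (a:ℚ) * X) ^ 2 + 4 * C (b:ℚ)) * (P - 1) ^ 2 = C (-4 * (b:ℚ)) := by
        have h1 : φ (Y ^ 2) = φ (((C (a:ℚ) * X) ^ 2 + 4 * C (b:ℚ)) * (P - 1) ^ 2
            - 4 * C (b:ℚ)) := by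
          rw [map_pow, ← hYint, hyK2]
        have h2 := hφinj h1
        have hc4 : (C (-4 * (b:ℚ)) : Polynomial ℚ) = -(4 * C (b:ℚ)) := by
          rw [show (-4 * (b:ℚ)) = -(4 * b) from by ring, C_neg, C_mul, map_ofNat]
        rw [hc4]
        linear_combination h2
      obtain ⟨n, r, hr, hYe, hMe⟩ := descent a b ha hb ((P - 1).natDegree) Y (P - 1)
        (-4 * (b:ℚ)) (by simp [hbQ]) le_rfl hYY
      -- norm computation forces n odd and r = ± b⁻ʲ
      have hM2 : (P - 1) ^ 2 = C r ^ 2 * Fq a b n ^ 2 := by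
        rcases hMe with h | h <;> rw [h] <;> ring
      have hnormC : C (-4 * (b:ℚ)) = C (r ^ 2 * (4 * (-(b:ℚ)) ^ n)) := by
        rw [← hYY, hYe, hM2, show (C (r ^ 2 * (4 * (-(b:ℚ)) ^ n)) : Polynomial ℚ)
            = C r ^ 2 * (4 * (- C (b:ℚ)) ^ n) from by
          rw [C_mul, C_mul, C_pow, C_pow, C_neg, map_ofNat]]
        linear_combination C r ^ 2 * PellQ a b n
      have hnorm : -4 * (b:ℚ) = r ^ 2 * (4 * (-(b:ℚ)) ^ n) := C_injective hnormC
      have hodd : Odd n := by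
        rcases Nat.even_or_odd n with he | ho
        · exfalso
          rw [he.neg_pow] at hnorm
          have hbp : (0:ℚ) < (b:ℚ) ^ n := by positivity
          nlinarith [sq_nonneg r, hb.le, (show (0:ℚ) < b by exact_mod_cast hb)]
        · exact ho
      obtain ⟨j, hj⟩ := hodd
      subst hj
      have hrb : r * (b:ℚ) ^ j = 1 ∨ r * (b:ℚ) ^ j = -1 := by
        have hbQ' : (0:ℚ) < (b:ℚ) := by exact_mod_cast hb
        have h1 : (r * (b:ℚ) ^ j) ^ 2 = 1 := by
          rw [Odd.neg_pow ⟨j, rfl⟩] at hnorm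
          have hbp : (0:ℚ) < (b:ℚ) ^ (2 * j + 1) := by positivity
          have : r ^ 2 * (b:ℚ) ^ (2 * j + 1) = (b:ℚ) := by nlinarith
          have hbj : ((b:ℚ) ^ j) ^ 2 * (b:ℚ) = (b:ℚ) ^ (2 * j + 1) := by
            rw [← pow_mul, ← pow_succ]
            congr 1
            omega
          field_simp [mul_pow]
          nlinarith [this, hbj]
        rcases mul_eq_zero.mp (show (r * (b:ℚ) ^ j - 1) * (r * (b:ℚ) ^ j + 1) = 0 from by
          linear_combination h1) with h | h
        · exact Or.inl (by linarith)
        · exact Or.inr (by linarith)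
      -- express q as a ratio of polynomials
      have hdenP : φ (2 * C (b:ℚ) * P) ≠ 0 := hφne _ (by
        refine mul_ne_zero (mul_ne_zero ?_ ?_) hP0
        · exact two_ne_zero
        · simpa [C_eq_zero] using hbQ)
      have hq2 : q * φ (2 * C (b:ℚ) * P) = φ (Y - C (a:ℚ) * X * (P - 1)) := by
        simp only [map_sub, map_mul, map_one, map_ofNat]
        have hYint' := hYint
        simp only [map_mul] at hYint'
        linear_combination hYint'
      have hq3 : q = φ (Y - C (a:ℚ) * X * (P - 1)) / φ (2 * C (b:ℚ) * P) :=
        (eq_div_iff hdenP).mpr hq2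
      have e1 : Lq a b (2*j+1) - C (a:ℚ) * X * Fq a b (2*j+1)
          = 2 * C (b:ℚ) * Fq a b (2*j) := Lq_sub a b (2*j)
      have e1' : Lq a b (2*j+1) + C (a:ℚ) * X * Fq a b (2*j+1) = 2 * Fq a b (2*j+2) := by
        have h := Lq_add a b (2*j+1)
        rwa [show 2*j+1+1 = 2*j+2 from rfl] at h
      have e2 : Fq a b (2*j) = Fq a b j * Lq a b j := Fq_even a b j
      have e2' : Fq a b (2*j+2) = Fq a b (j+1) * Lq a b (j+1) := by
        have h := Fq_even a b (j+1)
        rwa [show 2*(j+1) = 2*j+2 from by ring] at h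
      have e3 : Fq a b (j+1) * Lq a b j = Fq a b (2*j+1) + (-C (b:ℚ)) ^ j := FqL a b j
      have e3' : Fq a b j * Lq a b (j+1) = Fq a b (2*j+1) - (-C (b:ℚ)) ^ j := FqL' a b j
      have hgL : φ (C (b:ℚ) * Lq a b j) ≠ 0 :=
        hφne _ (mul_ne_zero (by simpa [C_eq_zero] using hbQ) (Lq_ne_zero a b ha hb j))
      have hgF : ∀ m, 0 < m → φ (C (b:ℚ) * Fq a b m) ≠ 0 := by
        intro m hm
        obtain ⟨m', rfl⟩ := Nat.exists_eq_add_of_lt hm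
        exact hφne _ (mul_ne_zero (by simpa [C_eq_zero] using hbQ)
          (by rw [show 0 + m' + 1 = m' + 1 from by ring]; exact Fq_ne_zero a b ha hb m'))
      rcases hMe with hMe | hMe
      · rcases hrb with hrb | hrb
        · have e5 : C r * C ((b:ℚ) ^ j) = (1 : Polynomial ℚ) := by rw [← C_mul, hrb, C_1]
          rcases Nat.even_or_odd j with hpar | hpar
          · -- leaf τ+ σ+ even : family 1
            have hparE : ((-C (b:ℚ) : Polynomial ℚ)) ^ j = C ((b:ℚ) ^ j) := by
              rw [hpar.neg_pow, ← C_pow]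
            left; refine ⟨j, Or.inl ?_⟩
            rw [htoF, htoF, hq3, div_eq_div_iff hdenP (hFne j), ← map_mul, ← map_mul]
            refine congrArg φ ?_
            linear_combination Fq a b (j+1) * hYe
              - (C (a:ℚ) * X * Fq a b (j+1) + 2 * C (b:ℚ) * Fq a b j) * hMe
              + (C r * Fq a b (j+1)) * e1 + (2 * C (b:ℚ) * C r * Fq a b (j+1)) * e2
              + (2 * C (b:ℚ) * C r * Fq a b j) * e3 + (2 * C (b:ℚ) * C r * Fq a b j) * hparE
              + (2 * C (b:ℚ) * Fq a b j) * e5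
          · -- leaf τ+ σ+ odd : family 2
            have hparO : ((-C (b:ℚ) : Polynomial ℚ)) ^ j = -C ((b:ℚ) ^ j) := by
              rw [hpar.neg_pow, ← C_pow]
            left; refine ⟨j, Or.inr (Or.inl ?_)⟩
            rw [htoL, htoL, hq3, div_eq_div_iff hdenP (hLne (j+1)), ← map_mul, ← map_mul]
            refine congrArg φ ?_
            linear_combination Lq a b (j+1) * hYe
              - (C (a:ℚ) * X * Lq a b (j+1) + 2 * C (b:ℚ) * Lq a b j) * hMe
              + (C r * Lq a b (j+1)) * e1 + (2 * C (b:ℚ) * C r * Lq a b (j+1)) * e2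
              + (2 * C (b:ℚ) * C r * Lq a b j) * e3' - (2 * C (b:ℚ) * C r * Lq a b j) * hparO
              + (2 * C (b:ℚ) * Lq a b j) * e5
        · have e5 : C r * C ((b:ℚ) ^ j) = (-1 : Polynomial ℚ) := by
            rw [← C_mul, hrb]; simp
          rcases Nat.even_or_odd j with hpar | hpar
          · -- leaf τ+ σ- even : family 2
            have hparE : ((-C (b:ℚ) : Polynomial ℚ)) ^ j = C ((b:ℚ) ^ j) := by
              rw [hpar.neg_pow, ← C_pow]
            left; refine ⟨j, Or.inr (Or.inl ?_)⟩
            rw [htoL, htoL, hq3, div_eq_div_iff hdenP (hLne (j+1)), ← map_mul, ← map_mul]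
            refine congrArg φ ?_
            linear_combination Lq a b (j+1) * hYe
              - (C (a:ℚ) * X * Lq a b (j+1) + 2 * C (b:ℚ) * Lq a b j) * hMe
              + (C r * Lq a b (j+1)) * e1 + (2 * C (b:ℚ) * C r * Lq a b (j+1)) * e2
              + (2 * C (b:ℚ) * C r * Lq a b j) * e3' - (2 * C (b:ℚ) * C r * Lq a b j) * hparE
              - (2 * C (b:ℚ) * Lq a b j) * e5
          · -- leaf τ+ σ- odd : family 1
            have hparO : ((-C (b:ℚ) : Polynomial ℚ)) ^ j = -C ((b:ℚ) ^ j) := by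
              rw [hpar.neg_pow, ← C_pow]
            left; refine ⟨j, Or.inl ?_⟩
            rw [htoF, htoF, hq3, div_eq_div_iff hdenP (hFne j), ← map_mul, ← map_mul]
            refine congrArg φ ?_
            linear_combination Fq a b (j+1) * hYe
              - (C (a:ℚ) * X * Fq a b (j+1) + 2 * C (b:ℚ) * Fq a b j) * hMe
              + (C r * Fq a b (j+1)) * e1 + (2 * C (b:ℚ) * C r * Fq a b (j+1)) * e2
              + (2 * C (b:ℚ) * C r * Fq a b j) * e3 + (2 * C (b:ℚ) * C r * Fq a b j) * hparO
              - (2 * C (b:ℚ) * Fq a b j) * e5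
      · rcases hrb with hrb | hrb
        · have e5 : C r * C ((b:ℚ) ^ j) = (1 : Polynomial ℚ) := by rw [← C_mul, hrb, C_1]
          rcases Nat.even_or_odd j with hpar | hpar
          · -- leaf τ- σ+ even : family 4, need j ≠ 0
            have hparE : ((-C (b:ℚ) : Polynomial ℚ)) ^ j = C ((b:ℚ) ^ j) := by
              rw [hpar.neg_pow, ← C_pow]
            have hj0 : 0 < j := by
              rcases Nat.eq_zero_or_pos j with rfl | h
              · exfalso
                apply hP0
                have hr1 : r = 1 := by simpa using hrb
                have h5 : P = 1 - C r := by
                  have h6 := hMe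
                  rw [show 2*0+1 = 1 from rfl, Fq_one] at h6
                  linear_combination h6
                rw [h5, hr1, C_1]; ring
              · exact h
            right; refine ⟨j, hj0, ?_⟩
            rw [htoF, htoB, htoF, ← map_mul, ← neg_div, ← map_neg, hq3,
              div_eq_div_iff hdenP (hgF j hj0)]
            rw [← map_mul, ← map_mul]
            refine congrArg φ ?_
            linear_combination (C (b:ℚ) * Fq a b j) * hYe
              - (C (a:ℚ) * X * (C (b:ℚ) * Fq a b j) + 2 * C (b:ℚ) * -Fq a b (j+1)) * hMe
              + (C r * (C (b:ℚ) * Fq a b j)) * e1' + (2 * C r * (C (b:ℚ) * Fq a b j)) * e2'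
              + (2 * C (b:ℚ) * C r * Fq a b (j+1)) * e3'
              - (2 * C (b:ℚ) * C r * Fq a b (j+1)) * hparE
              - (2 * C (b:ℚ) * Fq a b (j+1)) * e5
          · -- leaf τ- σ+ odd : family 3
            have hparO : ((-C (b:ℚ) : Polynomial ℚ)) ^ j = -C ((b:ℚ) ^ j) := by
              rw [hpar.neg_pow, ← C_pow]
            left; refine ⟨j, Or.inr (Or.inr ?_)⟩
            rw [htoL, htoB, htoL, ← map_mul, ← neg_div, ← map_neg, hq3,
              div_eq_div_iff hdenP hgL]
            rw [← map_mul, ← map_mul]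
            refine congrArg φ ?_
            linear_combination (C (b:ℚ) * Lq a b j) * hYe
              - (C (a:ℚ) * X * (C (b:ℚ) * Lq a b j) + 2 * C (b:ℚ) * -Lq a b (j+1)) * hMe
              + (C r * (C (b:ℚ) * Lq a b j)) * e1' + (2 * C r * (C (b:ℚ) * Lq a b j)) * e2'
              + (2 * C (b:ℚ) * C r * Lq a b (j+1)) * e3
              + (2 * C (b:ℚ) * C r * Lq a b (j+1)) * hparO
              - (2 * C (b:ℚ) * Lq a b (j+1)) * e5
        · have e5 : C r * C ((b:ℚ) ^ j) = (-1 : Polynomial ℚ) := by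
            rw [← C_mul, hrb]; simp
          rcases Nat.even_or_odd j with hpar | hpar
          · -- leaf τ- σ- even : family 3
            have hparE : ((-C (b:ℚ) : Polynomial ℚ)) ^ j = C ((b:ℚ) ^ j) := by
              rw [hpar.neg_pow, ← C_pow]
            left; refine ⟨j, Or.inr (Or.inr ?_)⟩
            rw [htoL, htoB, htoL, ← map_mul, ← neg_div, ← map_neg, hq3,
              div_eq_div_iff hdenP hgL]
            rw [← map_mul, ← map_mul]
            refine congrArg φ ?_
            linear_combination (C (b:ℚ) * Lq a b j) * hYe
              - (C (a:ℚ) * X * (C (b:ℚ) * Lq a b j) + 2 * C (b:ℚ) * -Lq a b (j+1)) * hMe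
              + (C r * (C (b:ℚ) * Lq a b j)) * e1' + (2 * C r * (C (b:ℚ) * Lq a b j)) * e2'
              + (2 * C (b:ℚ) * C r * Lq a b (j+1)) * e3
              + (2 * C (b:ℚ) * C r * Lq a b (j+1)) * hparE
              + (2 * C (b:ℚ) * Lq a b (j+1)) * e5
          · -- leaf τ- σ- odd : family 4
            have hj0 : 0 < j := Nat.pos_of_ne_zero (by rintro rfl; simp at hpar)
            have hparO : ((-C (b:ℚ) : Polynomial ℚ)) ^ j = -C ((b:ℚ) ^ j) := by
              rw [hpar.neg_pow, ← C_pow]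
            right; refine ⟨j, hj0, ?_⟩
            rw [htoF, htoB, htoF, ← map_mul, ← neg_div, ← map_neg, hq3,
              div_eq_div_iff hdenP (hgF j hj0)]
            rw [← map_mul, ← map_mul]
            refine congrArg φ ?_
            linear_combination (C (b:ℚ) * Fq a b j) * hYe
              - (C (a:ℚ) * X * (C (b:ℚ) * Fq a b j) + 2 * C (b:ℚ) * -Fq a b (j+1)) * hMe
              + (C r * (C (b:ℚ) * Fq a b j)) * e1' + (2 * C r * (C (b:ℚ) * Fq a b j)) * e2'
              + (2 * C (b:ℚ) * C r * Fq a b (j+1)) * e3'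
              - (2 * C (b:ℚ) * C r * Fq a b (j+1)) * hparO
              + (2 * C (b:ℚ) * Fq a b (j+1)) * e5

  · rintro (⟨i, hq | hq | hq⟩ | ⟨i, hi, hq⟩)
    · -- family 1
      obtain ⟨G, hG⟩ := (polyF_div a b hba i).2
      refine ⟨1 + (-1 : Polynomial ℤ) ^ i * G, ?_⟩
      rw [div_eq_iff hden]
      have hg : toRF (polyF a b (i + 1)) ≠ 0 := by rw [htoF]; exact hFne i
      have hqg : q * toRF (polyF a b (i + 1)) = toRF (polyF a b i) := by
        rw [hq, div_mul_cancel₀ _ hg]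
      have key := congrArg toRF (famZ1 a b i G hG)
      apply mul_right_cancel₀ (pow_ne_zero 2 hg)
      simp only [map_mul, map_add, map_sub, map_pow, map_one, map_ofNat, map_neg,
        C_eq_intCast, map_intCast, hca, hcb] at key hqg ⊢
      linear_combination key +
        ((1 + (-1 : RatFunc ℚ) ^ i * toRF G) * (((a : ℤ) : RatFunc ℚ) * toRF X)
            * toRF (polyF a b (i + 1))
          - ((a : ℤ) : RatFunc ℚ) * toRF X * toRF (polyF a b (i + 1))
          + (1 + (-1 : RatFunc ℚ) ^ i * toRF G) * ((b : ℤ) : RatFunc ℚ)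
            * (q * toRF (polyF a b (i + 1)) + toRF (polyF a b i))) * hqg
    · -- family 2
      obtain ⟨G, hG⟩ := (polyF_div a b hba i).2
      refine ⟨1 - (-1 : Polynomial ℤ) ^ i * G, ?_⟩
      rw [div_eq_iff hden]
      have hg : toRF (polyL a b (i + 1)) ≠ 0 := by rw [htoL]; exact hLne (i + 1)
      have hqg : q * toRF (polyL a b (i + 1)) = toRF (polyL a b i) := by
        rw [hq, div_mul_cancel₀ _ hg]
      have key := congrArg toRF (famZ2 a b i G hG)
      apply mul_right_cancel₀ (pow_ne_zero 2 hg)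
      simp only [map_mul, map_add, map_sub, map_pow, map_one, map_ofNat, map_neg,
        C_eq_intCast, map_intCast, hca, hcb] at key hqg ⊢
      linear_combination key +
        ((1 - (-1 : RatFunc ℚ) ^ i * toRF G) * (((a : ℤ) : RatFunc ℚ) * toRF X)
            * toRF (polyL a b (i + 1))
          - ((a : ℤ) : RatFunc ℚ) * toRF X * toRF (polyL a b (i + 1))
          + (1 - (-1 : RatFunc ℚ) ^ i * toRF G) * ((b : ℤ) : RatFunc ℚ)
            * (q * toRF (polyL a b (i + 1)) + toRF (polyL a b i))) * hqg
    · -- family 3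
      obtain ⟨G, hG⟩ := (polyF_div a b hba i).2
      refine ⟨1 + (-1 : Polynomial ℤ) ^ i * G, ?_⟩
      rw [div_eq_iff hden]
      have hg : toRF (polyL a b i) ≠ 0 := by rw [htoL]; exact hLne i
      have hgb : toRF (C b) ≠ 0 := by rw [htoB]; exact hBne
      have hD : toRF (C b) * toRF (polyL a b i) ≠ 0 := mul_ne_zero hgb hg
      have hqg : q * (toRF (C b) * toRF (polyL a b i)) = -toRF (polyL a b (i + 1)) := by
        rw [hq, ← neg_div, div_mul_cancel₀ _ hD]
      have key := congrArg toRF (famZ3 a b i G hG)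
      apply mul_right_cancel₀ (pow_ne_zero 2 hD)
      simp only [map_mul, map_add, map_sub, map_pow, map_one, map_ofNat, map_neg,
        C_eq_intCast, map_intCast, hca, hcb] at key hqg ⊢
      linear_combination key +
        ((1 + (-1 : RatFunc ℚ) ^ i * toRF G) * (((a : ℤ) : RatFunc ℚ) * toRF X)
            * (((b : ℤ) : RatFunc ℚ) * toRF (polyL a b i))
          - ((a : ℤ) : RatFunc ℚ) * toRF X * (((b : ℤ) : RatFunc ℚ) * toRF (polyL a b i))
          + (1 + (-1 : RatFunc ℚ) ^ i * toRF G) * ((b : ℤ) : RatFunc ℚ)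
            * (q * (((b : ℤ) : RatFunc ℚ) * toRF (polyL a b i)) + -toRF (polyL a b (i + 1)))) * hqg
    · -- family 4
      obtain ⟨G, hG⟩ := (polyF_div a b hba i).2
      refine ⟨1 - (-1 : Polynomial ℤ) ^ i * G, ?_⟩
      rw [div_eq_iff hden]
      obtain ⟨i', rfl⟩ : ∃ i', i = i' + 1 := ⟨i - 1, by omega⟩
      have hg : toRF (polyF a b (i' + 1)) ≠ 0 := by rw [htoF]; exact hFne i'
      have hgb : toRF (C b) ≠ 0 := by rw [htoB]; exact hBne
      have hD : toRF (C b) * toRF (polyF a b (i' + 1)) ≠ 0 := mul_ne_zero hgb hg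
      have hqg : q * (toRF (C b) * toRF (polyF a b (i' + 1))) = -toRF (polyF a b (i' + 1 + 1)) := by
        rw [hq, ← neg_div, div_mul_cancel₀ _ hD]
      have key := congrArg toRF (famZ4 a b (i' + 1) G hG)
      apply mul_right_cancel₀ (pow_ne_zero 2 hD)
      simp only [map_mul, map_add, map_sub, map_pow, map_one, map_ofNat, map_neg,
        C_eq_intCast, map_intCast, hca, hcb] at key hqg ⊢
      linear_combination key +
        ((1 - (-1 : RatFunc ℚ) ^ (i' + 1) * toRF G) * (((a : ℤ) : RatFunc ℚ) * toRF X)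
            * (((b : ℤ) : RatFunc ℚ) * toRF (polyF a b (i' + 1)))
          - ((a : ℤ) : RatFunc ℚ) * toRF X * (((b : ℤ) : RatFunc ℚ) * toRF (polyF a b (i' + 1)))
          + (1 - (-1 : RatFunc ℚ) ^ (i' + 1) * toRF G) * ((b : ℤ) : RatFunc ℚ)
            * (q * (((b : ℤ) : RatFunc ℚ) * toRF (polyF a b (i' + 1)))
              + -toRF (polyF a b (i' + 1 + 1)))) * hqg
end
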